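/- arXiv:1002.0702 — 5 statements merged into one kernel-verified Lean document; each statement's English description precedes it below -/
import Mathlib

section
/- Let ν be a nonzero non-negative Radon measure on (0,∞) which integrates x ↦ y^x for all sufficiently small y > 0, and let m₀ = inf supp ν. Then the limit as y → 0⁺ of (∫ x y^x dν(x)) / (∫ y^x dν(x)) equals m₀. -/
/-!
Write `g y = ∫ y ^ x dν` and `N y = ∫ (x - m₀) y ^ x dν`, so the ratio equals `m₀ + N y / g y`
and `N ≥ 0` because `ν` lives on `[m₀, ∞)`. Given `ε > 0`, split `N y` at `a = m₀ + ε / 2`: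
below `a` it is at most `(ε / 2) g y`, and above `a`, comparing `y ^ x` with a fixed base `w`,
it is `O(y ^ a)`. Since `m₀` lies in the support, `g y ≥ y ^ (m₀ + ε / 4) ν (-∞, m₀ + ε / 4)`
with positive mass, so the second part divided by `g y` is `O(y ^ (ε / 4))`, which tends to `0`.
-/

open MeasureTheory Set Filter Topology

namespace MeasureTheory.Measure

theorem setOf_forall_measure_Ioo_ne_zero_eq_support (ν : Measure ℝ) :
    {x : ℝ | ∀ ε > 0, ν (Ioo (x - ε) (x + ε)) ≠ 0} = ν.support := by
  ext x
  simp [Metric.nhds_basis_ball.mem_measureSupport, Real.ball_eq_Ioo, pos_iff_ne_zero]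

variable {ν : Measure ℝ}

theorem ae_csInf_support_le (hbdd : BddBelow ν.support) : ∀ᵐ x ∂ν, sInf ν.support ≤ x :=
  eventually_of_mem support_mem_ae fun _ hx => csInf_le hbdd hx

theorem measure_Iio_pos_of_csInf_support_lt (hne : ν.support.Nonempty)
    (hbdd : BddBelow ν.support) {b : ℝ} (hb : sInf ν.support < b) : 0 < ν (Iio b) :=
  (mem_support_iff_forall _).mp (isClosed_support.csInf_mem hne hbdd) _ (Iio_mem_nhds hb)

end MeasureTheory.Measure

variable {ν : Measure ℝ}

theorem measure_Iic_lt_top_of_integrable_rpow {y : ℝ} (hy : 0 < y) (hy1 : y < 1)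
    (hint : Integrable (fun x : ℝ => y ^ x) ν) (A : ℝ) : ν (Iic A) < ⊤ := by
  refine (measure_mono fun x (hx : x ≤ A) => ?_).trans_lt
    (hint.measure_norm_ge_lt_top (Real.rpow_pos_of_pos hy A))
  rw [mem_ofPred_eq, Real.norm_of_nonneg (Real.rpow_nonneg hy.le x)]
  exact Real.rpow_le_rpow_of_exponent_ge hy hy1.le hx

theorem integrable_mul_rpow_of_lt {y z : ℝ} (hy : 0 < y) (hyz : y < z)
    (hint : Integrable (fun x : ℝ => z ^ x) ν) (hnonneg : ∀ᵐ x ∂ν, 0 ≤ x) :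
    Integrable (fun x : ℝ => x * y ^ x) ν := by
  set δ := Real.log (z / y)
  have hzy : 0 < z / y := div_pos (hy.trans hyz) hy
  have hδ : 0 < δ := Real.log_pos ((one_lt_div hy).mpr hyz)
  refine (hint.const_mul δ⁻¹).mono'
    (continuous_id.mul (Real.continuous_const_rpow hy.ne')).aestronglyMeasurable ?_
  filter_upwards [hnonneg] with x hx
  -- `δ x ≤ exp (δ x) = (z / y) ^ x`
  have hx_le : x ≤ δ⁻¹ * (z / y) ^ x := by
    rw [Real.rpow_def_of_pos hzy, le_inv_mul_iff₀ hδ, mul_comm]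
    linarith [Real.add_one_le_exp (x * δ)]
  have hyx := Real.rpow_pos_of_pos hy x
  calc ‖x * y ^ x‖ = x * y ^ x := Real.norm_of_nonneg (by positivity)
    _ ≤ δ⁻¹ * (z / y) ^ x * y ^ x := by gcongr
    _ = δ⁻¹ * z ^ x := by
      rw [mul_assoc, ← Real.mul_rpow hzy.le hy.le, div_mul_cancel₀ _ hy.ne']

theorem integral_rpow_pos (hν : ν ≠ 0) {y : ℝ} (hy : 0 < y)
    (hint : Integrable (fun x : ℝ => y ^ x) ν) : 0 < ∫ x, y ^ x ∂ν := by
  rw [integral_pos_iff_support_of_nonneg (fun x => (Real.rpow_pos_of_pos hy x).le) hint]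
  simpa [Function.support, (Real.rpow_pos_of_pos hy _).ne'] using
    Measure.measure_univ_pos.mpr hν

theorem rpow_mul_measureReal_Iio_le_integral_rpow {y : ℝ} (hy : 0 < y) (hy1 : y ≤ 1)
    (hint : Integrable (fun x : ℝ => y ^ x) ν) {b : ℝ} (hb : ν (Iio b) ≠ ⊤) :
    y ^ b * ν.real (Iio b) ≤ ∫ x, y ^ x ∂ν :=
  (setIntegral_ge_of_const_le_real measurableSet_Iio hb
      (fun _ hx => Real.rpow_le_rpow_of_exponent_ge hy hy1 (le_of_lt hx)) hint.integrableOn).trans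
    (setIntegral_le_integral hint (.of_forall fun x => (Real.rpow_pos_of_pos hy x).le))

theorem integral_sub_mul_rpow_le {m a y w : ℝ} (hma : m ≤ a) (hy : 0 < y) (hyw : y ≤ w)
    (hint : Integrable (fun x : ℝ => y ^ x) ν)
    (hint_sub : Integrable (fun x : ℝ => (x - m) * y ^ x) ν)
    (hint_sub_w : Integrable (fun x : ℝ => (x - m) * w ^ x) ν) :
    ∫ x, (x - m) * y ^ x ∂ν ≤
      (a - m) * ∫ x, y ^ x ∂ν + y ^ a / w ^ a * ∫ x in Ici a, (x - m) * w ^ x ∂ν := by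
  have hw : 0 < w := hy.trans_le hyw
  rw [← integral_add_compl measurableSet_Iio hint_sub, compl_Iio, ← integral_const_mul,
    ← integral_const_mul]
  gcongr ?_ + ?_
  · calc ∫ x in Iio a, (x - m) * y ^ x ∂ν ≤ ∫ x in Iio a, (a - m) * y ^ x ∂ν :=
          setIntegral_mono_on hint_sub.integrableOn (hint.const_mul _).integrableOn
            measurableSet_Iio fun x hx => by
              gcongr
              exact le_of_lt hx
      _ ≤ ∫ x, (a - m) * y ^ x ∂ν :=
          setIntegral_le_integral (hint.const_mul _)
            (.of_forall fun x => mul_nonneg (sub_nonneg.mpr hma) (Real.rpow_pos_of_pos hy x).le)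
  · refine setIntegral_mono_on hint_sub.integrableOn (hint_sub_w.const_mul _).integrableOn
      measurableSet_Ici fun x (hx : a ≤ x) => ?_
    have hpow : y ^ x ≤ y ^ a / w ^ a * w ^ x :=
      calc y ^ x = y ^ a * y ^ (x - a) := by rw [← Real.rpow_add hy, add_sub_cancel]
        _ ≤ y ^ a * w ^ (x - a) := by gcongr
        _ = y ^ a / w ^ a * w ^ x := by rw [Real.rpow_sub hw]; ring
    calc (x - m) * y ^ x ≤ (x - m) * (y ^ a / w ^ a * w ^ x) := by
          gcongr; linarith
      _ = _ := by ring

theorem tendsto_integral_sub_mul_rpow_div_integral_rpow {m y₁ : ℝ} (hy₁ : 0 < y₁) (hy₁1 : y₁ ≤ 1)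
    (hpos : ∀ b, m < b → 0 < ν (Iio b)) (hm : ∀ᵐ x ∂ν, m ≤ x)
    (hint : ∀ y ∈ Ioo 0 y₁, Integrable (fun x : ℝ => y ^ x) ν)
    (hint_sub : ∀ y ∈ Ioo 0 y₁, Integrable (fun x : ℝ => (x - m) * y ^ x) ν) :
    Tendsto (fun y : ℝ => (∫ x, (x - m) * y ^ x ∂ν) / ∫ x, y ^ x ∂ν) (𝓝[>] 0) (𝓝 0) := by
  rw [Metric.tendsto_nhds]
  intro ε hε
  set w := y₁ / 2 with hw_def
  have hw : w ∈ Ioo 0 y₁ := ⟨by positivity, by linarith⟩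
  set b := m + ε / 4 with hb
  set a := m + ε / 2 with ha
  set c := ν.real (Iio b)
  have hfin : ν (Iio b) ≠ ⊤ :=
    ((measure_mono Iio_subset_Iic_self).trans_lt (measure_Iic_lt_top_of_integrable_rpow
      hw.1 (hw.2.trans_le hy₁1) (hint w hw) b)).ne
  have hc : 0 < c := ENNReal.toReal_pos (hpos b (by linarith [hb])).ne' hfin
  set K := (∫ x in Ici a, (x - m) * w ^ x ∂ν) / w ^ a with hK
  have hsmall : ∀ᶠ y in 𝓝[>] 0, y ^ (ε / 4) * K / c < ε / 2 := by
    have : Tendsto (fun y : ℝ => y ^ (ε / 4) * K / c) (𝓝 0) (𝓝 0) := by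
      simpa [Real.zero_rpow (by positivity : ε / 4 ≠ 0)] using
        ((Real.continuous_rpow_const (by positivity : 0 ≤ ε / 4)).tendsto 0).mul_const K
          |>.div_const c
    exact (this.mono_left nhdsWithin_le_nhds).eventually_lt_const (by linarith)
  filter_upwards [hsmall, Ioo_mem_nhdsGT hw.1] with y hyK ⟨hy, hyw⟩
  have hy₁' : y ∈ Ioo 0 y₁ := ⟨hy, hyw.trans hw.2⟩
  have hlower := rpow_mul_measureReal_Iio_le_integral_rpow hy
    (hy₁'.2.le.trans hy₁1) (hint y hy₁') hfin
  have hupper := integral_sub_mul_rpow_le (by linarith [ha] : m ≤ a) hy hyw.le (hint y hy₁')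
    (hint_sub y hy₁') (hint_sub w hw)
  have hyb : 0 < y ^ b * c := by positivity
  have hg : 0 < ∫ x, y ^ x ∂ν := hyb.trans_le hlower
  have hN : 0 ≤ ∫ x, (x - m) * y ^ x ∂ν := integral_nonneg_of_ae <| by
    filter_upwards [hm] with x hx using mul_nonneg (sub_nonneg.mpr hx) (by positivity)
  rw [Real.dist_eq, sub_zero, abs_of_nonneg (by positivity), div_lt_iff₀ hg]
  calc ∫ x, (x - m) * y ^ x ∂ν
      ≤ ε / 2 * ∫ x, y ^ x ∂ν + y ^ (ε / 4) * K / c * (y ^ b * c) := by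
        convert hupper using 2
        · ring
        · rw [hK, show y ^ a = y ^ (ε / 4) * y ^ b by rw [← Real.rpow_add hy, ha, hb]; ring_nf]
          field_simp
    _ < ε / 2 * ∫ x, y ^ x ∂ν + ε / 2 * ∫ x, y ^ x ∂ν := by
        refine add_lt_add_right ?_ _
        calc y ^ (ε / 4) * K / c * (y ^ b * c) < ε / 2 * (y ^ b * c) := by gcongr
          _ ≤ ε / 2 * ∫ x, y ^ x ∂ν := by gcongr
    _ = ε * ∫ x, y ^ x ∂ν := by ring

theorem tendsto_integral_mul_rpow_div_integral_rpow {m y₁ : ℝ} (hy₁ : 0 < y₁) (hy₁1 : y₁ ≤ 1)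
    (hpos : ∀ b, m < b → 0 < ν (Iio b)) (hm : ∀ᵐ x ∂ν, m ≤ x)
    (hint : ∀ y ∈ Ioo 0 y₁, Integrable (fun x : ℝ => y ^ x) ν)
    (hint_mul : ∀ y ∈ Ioo 0 y₁, Integrable (fun x : ℝ => x * y ^ x) ν) :
    Tendsto (fun y : ℝ => (∫ x, x * y ^ x ∂ν) / ∫ x, y ^ x ∂ν) (𝓝[>] 0) (𝓝 m) := by
  have hν : ν ≠ 0 := fun h => by simpa [h] using hpos (m + 1) (by linarith)
  have hint_sub (y : ℝ) (hy : y ∈ Ioo 0 y₁) : Integrable (fun x : ℝ => (x - m) * y ^ x) ν := by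
    simpa only [sub_mul, Pi.sub_def] using (hint_mul y hy).sub ((hint y hy).const_mul m)
  have key := (tendsto_integral_sub_mul_rpow_div_integral_rpow hy₁ hy₁1 hpos hm hint
    hint_sub).add_const m
  rw [zero_add] at key
  refine key.congr' ?_
  filter_upwards [Ioo_mem_nhdsGT hy₁] with y hy
  have hg := (integral_rpow_pos hν hy.1 (hint y hy)).ne'
  simp only [sub_mul]
  rw [integral_sub (hint_mul y hy) ((hint y hy).const_mul m), integral_const_mul]
  field_simp
  ring

/-- For a nonzero non-negative Radon measure ν on (0,∞) integrating
`x ↦ y^x` for small `y > 0`, the ratio `(∫ x y^x dν)/(∫ y^x dν)` tends to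
`m₀ = inf supp ν` as `y → 0⁺`. -/
theorem stmt_0 (ν : Measure ℝ) (hν : ν ≠ 0)
    (hsupp : ν (Set.Iic (0:ℝ)) = 0)
    (y₀ : ℝ) (hy₀ : y₀ ∈ Set.Ioo (0:ℝ) 1)
    (hint : ∀ y ∈ Set.Ioo (0:ℝ) y₀, Integrable (fun x : ℝ => y ^ x) ν)
    (m₀ : ℝ)
    (hm₀ : m₀ = sInf {x : ℝ | ∀ ε > 0, ν (Set.Ioo (x - ε) (x + ε)) ≠ 0}) :
    Tendsto (fun y : ℝ => (∫ x, x * y ^ x ∂ν) / (∫ x, y ^ x ∂ν))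
      (𝓝[>] (0:ℝ)) (𝓝 m₀) := by
  rw [Measure.setOf_forall_measure_Ioo_ne_zero_eq_support] at hm₀
  subst hm₀
  have hnonneg : ∀ᵐ x ∂ν, 0 ≤ x :=
    ae_iff.mpr (measure_mono_null (fun x hx => (not_le.mp hx).le) hsupp)
  have hbdd : BddBelow ν.support := ⟨0, Measure.support_subset_of_isClosed isClosed_Ici hnonneg⟩
  refine tendsto_integral_mul_rpow_div_integral_rpow hy₀.1 hy₀.2.le
    (fun b => Measure.measure_Iio_pos_of_csInf_support_lt (Measure.nonempty_support hν) hbdd)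
    (Measure.ae_csInf_support_le hbdd) hint fun y hy => ?_
  have hz : (y + y₀) / 2 ∈ Ioo 0 y₀ := ⟨by linarith [hy.1, hy.2], by linarith [hy.2]⟩
  exact integrable_mul_rpow_of_lt hy.1 (by linarith [hy.2]) (hint _ hz) hnonneg
end

section
/- With μ₀, g₀, K, ℓ_t as above, and M_t := g₀(ℓ_t) for t > 1/K, M_t := g₀(1) = ∫ m dμ₀ for t ≤ 1/K (assuming this is finite), the function t ↦ M_t is continuous on [0,∞), constant on [0, 1/K], and strictly decreasing on [1/K, ∞). -/
/-!
Put `G x = ∫ m x^m dμ₀` and `H x = x G'(x) = ∫ m² x^m dμ₀`; both are strictly increasing on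
`[0,1]` because `μ₀` is a nonzero measure on `(0,∞)`, and `G 1 = M₀`, `H 1 = K`. Extending `ℓ` by
`L t = 1` for `t ≤ 1/K` gives `M = G ∘ L` and `H ∘ L = t ↦ 1 / max t (1/K)`. The right-hand side
is continuous and strictly decreasing on `[1/K,∞)`; as `H` is strictly increasing, `L` inherits
both properties, and so does `G ∘ L` because `G` is continuous and strictly increasing.
-/

open MeasureTheory Set Filter Topology

section Order

variable {α β γ : Type*} [LinearOrder β] [TopologicalSpace β] [OrderTopology β]
  [LinearOrder γ] [TopologicalSpace γ] [OrderClosedTopology γ]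

theorem tendsto_of_strictMonoOn_comp {l : Filter α} {f : α → β} {H : β → γ} {s : Set β} {c : β}
    (hs : s.OrdConnected) (hH : StrictMonoOn H s) (hc : c ∈ s) (hf : ∀ᶠ x in l, f x ∈ s)
    (hHf : Tendsto (fun x => H (f x)) l (𝓝 (H c))) : Tendsto f l (𝓝 c) := by
  rw [tendsto_order]
  constructor
  · intro a hac
    by_cases ha : a ∈ s
    · filter_upwards [hf, hHf.eventually (eventually_gt_nhds (hH ha hc hac))] with x hxs hx
      exact (hH.lt_iff_lt ha hxs).1 hx
    · filter_upwards [hf] with x hxs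
      by_contra! hxa
      exact ha (hs.out hxs hc ⟨hxa, hac.le⟩)
  · intro b hcb
    by_cases hb : b ∈ s
    · filter_upwards [hf, hHf.eventually (eventually_lt_nhds (hH hc hb hcb))] with x hxs hx
      exact (hH.lt_iff_lt hxs hb).1 hx
    · filter_upwards [hf] with x hxs
      by_contra! hbx
      exact hb (hs.out hc hxs ⟨hcb.le, hbx⟩)

end Order

theorem strictAntiOn_of_strictMonoOn_comp {α β γ : Type*} [Preorder α] [LinearOrder β]
    [Preorder γ] {f : α → β} {H : β → γ} {s : Set β} {t : Set α} (hH : StrictMonoOn H s)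
    (hf : MapsTo f t s) (hHf : StrictAntiOn (H ∘ f) t) : StrictAntiOn f t :=
  fun _ ha _ hb hab => (hH.lt_iff_lt (hf hb) (hf ha)).1 (hHf ha hb hab)

theorem continuous_one_div_max_const {c : ℝ} (hc : 0 < c) : Continuous fun t : ℝ => 1 / max t c :=
  continuous_const.div (continuous_id.max continuous_const) fun _ => (lt_max_of_lt_right hc).ne'

theorem strictAntiOn_one_div_max_const {c : ℝ} (hc : 0 < c) :
    StrictAntiOn (fun t : ℝ => 1 / max t c) (Ici c) := fun a ha b hb hab => by
  simp only [max_eq_left (mem_Ici.1 ha), max_eq_left (mem_Ici.1 hb)]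
  exact one_div_lt_one_div_of_lt (hc.trans_le ha) hab

theorem ae_pos_of_measure_Iic_zero {μ : Measure ℝ} (h : μ (Iic 0) = 0) : ∀ᵐ m ∂μ, 0 < m :=
  ae_iff.2 (by simp only [not_lt]; exact h)

section Moments

variable {μ : Measure ℝ} {w : ℝ → ℝ}

theorem rpow_mem_Icc_zero_one {x m : ℝ} (hx : x ∈ Icc (0 : ℝ) 1) (hm : 0 < m) :
    x ^ m ∈ Icc (0 : ℝ) 1 :=
  ⟨Real.rpow_nonneg hx.1 m, Real.rpow_le_one hx.1 hx.2 hm.le⟩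

theorem integrable_mul_rpow (hμ : ∀ᵐ m ∂μ, 0 < m) (hw : Integrable w μ) {x : ℝ}
    (hx : x ∈ Icc (0 : ℝ) 1) : Integrable (fun m => w m * x ^ m) μ := by
  refine hw.mul_bdd (c := 1) (measurable_const.pow measurable_id).aestronglyMeasurable ?_
  filter_upwards [hμ] with m hm
  have h := rpow_mem_Icc_zero_one hx hm
  rw [Real.norm_of_nonneg h.1]
  exact h.2

theorem continuousOn_integral_mul_rpow (hμ : ∀ᵐ m ∂μ, 0 < m) (hw : Integrable w μ) :
    ContinuousOn (fun x => ∫ m, w m * x ^ m ∂μ) (Icc 0 1) := by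
  refine continuousOn_of_dominated (bound := fun m => ‖w m‖)
    (fun x hx => (integrable_mul_rpow hμ hw hx).aestronglyMeasurable) (fun x hx => ?_) hw.norm ?_
  · filter_upwards [hμ] with m hm
    have h := rpow_mem_Icc_zero_one hx hm
    rw [norm_mul, Real.norm_of_nonneg h.1]
    exact mul_le_of_le_one_right (norm_nonneg _) h.2
  · filter_upwards [hμ] with m hm
    exact (continuous_const.mul (Real.continuous_rpow_const hm.le)).continuousOn

theorem strictMonoOn_integral_mul_rpow (hμ₀ : μ ≠ 0) (hμ : ∀ᵐ m ∂μ, 0 < m)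
    (hw : Integrable w μ) (hw_pos : ∀ᵐ m ∂μ, 0 < w m) :
    StrictMonoOn (fun x => ∫ m, w m * x ^ m ∂μ) (Icc 0 1) := by
  intro x hx y hy hxy
  have hdiff_pos : ∀ᵐ m ∂μ, 0 < w m * y ^ m - w m * x ^ m := by
    filter_upwards [hμ, hw_pos] with m hm hwm
    rw [← mul_sub]
    exact mul_pos hwm (sub_pos.2 (Real.rpow_lt_rpow hx.1 hxy hm))
  have hint := (integrable_mul_rpow hμ hw hy).sub (integrable_mul_rpow hμ hw hx)
  have h : 0 < ∫ m, (w m * y ^ m - w m * x ^ m) ∂μ := by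
    rw [integral_pos_iff_support_of_nonneg_ae (hdiff_pos.mono fun m hm => hm.le) hint]
    refine (Measure.measure_univ_pos.2 hμ₀).trans_le (measure_mono_ae ?_)
    filter_upwards [hdiff_pos] with m hm _
    exact hm.ne'
  rw [integral_sub (integrable_mul_rpow hμ hw hy) (integrable_mul_rpow hμ hw hx)] at h
  exact sub_pos.1 h

theorem hasDerivAt_integral_mul_rpow (hμ : ∀ᵐ m ∂μ, 0 < m) (hint₁ : Integrable (fun m => m) μ)
    (hint₂ : Integrable (fun m => m ^ 2) μ) {x₀ : ℝ} (hx₀ : x₀ ∈ Ioo (0 : ℝ) 1) :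
    HasDerivAt (fun x => ∫ m, m * x ^ m ∂μ) (∫ m, m ^ 2 * x₀ ^ (m - 1) ∂μ) x₀ := by
  have hnhds : Ioo (x₀ / 2) 1 ∈ 𝓝 x₀ := Ioo_mem_nhds (by linarith [hx₀.1]) hx₀.2
  refine (hasDerivAt_integral_of_dominated_loc_of_deriv_le
    (F' := fun x m => m ^ 2 * x ^ (m - 1)) (bound := fun m => m ^ 2 * (2 / x₀)) hnhds
    (.of_forall fun x => by fun_prop) (integrable_mul_rpow hμ hint₁ (Ioo_subset_Icc_self hx₀))
    (by fun_prop) ?_ (hint₂.mul_const _) ?_).2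
  · filter_upwards [hμ] with m hm x hx
    have hx_pos : 0 < x := by linarith [hx.1, hx₀.1]
    have hbound : x ^ (m - 1) ≤ 2 / x₀ :=
      calc x ^ (m - 1) = x ^ m / x := by rw [Real.rpow_sub hx_pos, Real.rpow_one]
        _ ≤ 1 / x := by gcongr; exact Real.rpow_le_one hx_pos.le hx.2.le hm.le
        _ ≤ 2 / x₀ := by rw [div_le_div_iff₀ hx_pos hx₀.1]; linarith [hx.1]
    rw [Real.norm_of_nonneg (by positivity)]
    gcongr
  · filter_upwards [hμ] with m hm x hx
    have hx_pos : 0 < x := by linarith [hx.1, hx₀.1]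
    simpa only [← mul_assoc, ← sq] using
      (Real.hasDerivAt_rpow_const (p := m) (Or.inl hx_pos.ne')).const_mul m

theorem mul_deriv_eq_integral_sq_mul_rpow (hμ : ∀ᵐ m ∂μ, 0 < m)
    (hint₁ : Integrable (fun m => m) μ) (hint₂ : Integrable (fun m => m ^ 2) μ) {g : ℝ → ℝ}
    (hg : ∀ x ∈ Icc (0 : ℝ) 1, g x = ∫ m, m * x ^ m ∂μ) {x : ℝ} (hx : x ∈ Ioo (0 : ℝ) 1) :
    x * deriv g x = ∫ m, m ^ 2 * x ^ m ∂μ := by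
  have hg_eq : g =ᶠ[𝓝 x] fun y => ∫ m, m * y ^ m ∂μ := by
    filter_upwards [Ioo_mem_nhds hx.1 hx.2] with y hy
    exact hg y (Ioo_subset_Icc_self hy)
  rw [hg_eq.deriv_eq, (hasDerivAt_integral_mul_rpow hμ hint₁ hint₂ hx).deriv,
    ← integral_const_mul]
  congr 1 with m
  rw [Real.rpow_sub hx.1, Real.rpow_one]
  field_simp [hx.1.ne']

end Moments

/-- With `M_t = g₀(ℓ_t)` for `t > 1/K` and `M_t = M₀ = ∫ m dμ₀`
for `t ≤ 1/K`, the function `t ↦ M_t` is continuous on `[0,∞)`, constant on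
`[0,1/K]` and strictly decreasing on `[1/K,∞)`. -/
theorem stmt_3 (μ₀ : Measure ℝ) (hμ₀ : μ₀ ≠ 0)
    (hsupp : μ₀ (Set.Iic (0:ℝ)) = 0)
    (K : ℝ) (hKpos : 0 < K)
    (hint : Integrable (fun m : ℝ => m ^ 2) μ₀)
    (hK : ∫ m, m ^ 2 ∂μ₀ = K)
    (M₀ : ℝ) (hintm : Integrable (fun m : ℝ => m) μ₀)
    (hM₀ : ∫ m, m ∂μ₀ = M₀)
    (g₀ : ℝ → ℝ)
    (hg₀ : ∀ x ∈ Set.Icc (0:ℝ) 1, g₀ x = ∫ m, m * x ^ m ∂μ₀)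
    (ℓ : ℝ → ℝ)
    (hℓ : ∀ t > 1 / K, ℓ t ∈ Set.Ioo (0:ℝ) 1 ∧ ℓ t * deriv g₀ (ℓ t) = 1 / t)
    (M : ℝ → ℝ)
    (hM : ∀ t, M t = if t ≤ 1 / K then M₀ else g₀ (ℓ t)) :
    ContinuousOn M (Set.Ici (0:ℝ)) ∧
    (∀ t ∈ Set.Icc (0:ℝ) (1 / K), M t = M₀) ∧
    StrictAntiOn M (Set.Ici (1 / K)) := by
  have hμ := ae_pos_of_measure_Iic_zero hsupp
  set G := fun x : ℝ => ∫ m, m * x ^ m ∂μ₀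
  set H := fun x : ℝ => ∫ m, m ^ 2 * x ^ m ∂μ₀
  set L := fun t => if t ≤ 1 / K then 1 else ℓ t
  have hL_of_le : ∀ t ≤ 1 / K, L t = 1 := fun t ht => if_pos ht
  have hL_of_gt : ∀ t > 1 / K, L t = ℓ t := fun t ht => if_neg (not_le.2 ht)
  have hL : ∀ t, L t ∈ Icc (0 : ℝ) 1 := fun t => by
    rcases le_or_gt t (1 / K) with ht | ht
    · rw [hL_of_le t ht]; exact right_mem_Icc.2 zero_le_one
    · rw [hL_of_gt t ht]; exact Ioo_subset_Icc_self (hℓ t ht).1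
  have hM_eq : M = G ∘ L := funext fun t => by
    rcases le_or_gt t (1 / K) with ht | ht
    · simp only [hM, if_pos ht, Function.comp, hL_of_le t ht, G, Real.one_rpow, mul_one, hM₀]
    · rw [hM, if_neg (not_le.2 ht), Function.comp, hL_of_gt t ht, hg₀ _ (hL_of_gt t ht ▸ hL t)]
  have hHL : H ∘ L = fun t => 1 / max t (1 / K) := funext fun t => by
    rcases le_or_gt t (1 / K) with ht | ht
    · simp only [Function.comp, hL_of_le t ht, max_eq_right ht, H, Real.one_rpow, mul_one, hK,
        one_div_one_div]
    · obtain ⟨hℓ_mem, hℓ_eq⟩ := hℓ t ht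
      rw [Function.comp, hL_of_gt t ht, max_eq_left ht.le, ← hℓ_eq,
        mul_deriv_eq_integral_sq_mul_rpow hμ hintm hint hg₀ hℓ_mem]
  have hG := strictMonoOn_integral_mul_rpow hμ₀ hμ hintm hμ
  have hH := strictMonoOn_integral_mul_rpow hμ₀ hμ hint (hμ.mono fun m hm => by positivity)
  have hK_inv : 0 < 1 / K := one_div_pos.2 hKpos
  have hL_cont : Continuous L := continuous_iff_continuousAt.2 fun t =>
    tendsto_of_strictMonoOn_comp ordConnected_Icc hH (hL t) (.of_forall hL)
      ((hHL ▸ continuous_one_div_max_const hK_inv : Continuous (H ∘ L)).tendsto t)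
  have hL_anti : StrictAntiOn L (Ici (1 / K)) :=
    strictAntiOn_of_strictMonoOn_comp hH (fun t _ => hL t)
      (hHL ▸ strictAntiOn_one_div_max_const hK_inv)
  refine ⟨?_, fun t ht => by rw [hM, if_pos ht.2], ?_⟩
  · rw [hM_eq]
    exact ((continuousOn_integral_mul_rpow hμ hintm).comp_continuous hL_cont hL).continuousOn
  · rw [hM_eq]
    exact hG.comp_strictAntiOn hL_anti fun t _ => hL t
end

section
/- Let μ₀ be a nonzero non-negative Radon measure on (0,∞) with m₀ := inf supp μ₀ ≥ 0, finite second moment K ∈ (0,∞), and for t > 1/K let ℓ_t ∈ (0,1) solve ℓ_t g₀'(ℓ_t) = 1/t where g₀(x) = ∫ m x^m dμ₀(m), and M_t = g₀(ℓ_t). Then 1/(t M_t) → m₀ as t → ∞. -/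
/-!
Write `G_k(x) = ∫ m ^ k * x ^ m dμ₀`, so that `g₀ = G₁` on `[0, 1]`. Differentiating under the
integral gives `x G₁'(x) = G₂(x)`, hence `G₂(ℓ_t) = 1/t` and `1/(t M_t) = G₂(ℓ_t) / G₁(ℓ_t)`.
Since `m₀` lies in the support, `G_k(x) ≥ c x ^ p` on `(0, 1]` for every `p > m₀`; with
`G₂(ℓ_t) = 1/t` this forces `ℓ_t → 0`. As `x → 0⁺` the ratio `G₂/G₁` is squeezed to `m₀`: there is
no mass below `m₀`, and the mass above `m₀ + δ` contributes at most `K x ^ (m₀ + δ)` to `G₂`,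
which is `O(x ^ (δ/2))` relative to `G₁(x) ≥ c x ^ (m₀ + δ/2)`.
-/

open MeasureTheory Set Filter Topology

namespace MeasureTheory.Measure

theorem setOf_measure_Ioo_ne_zero_eq_support (μ : Measure ℝ) :
    {x : ℝ | ∀ ε > 0, μ (Ioo (x - ε) (x + ε)) ≠ 0} = μ.support := by
  ext x
  simp only [mem_ofPred_eq, (nhds_basis_Ioo_pos x).mem_measureSupport, pos_iff_ne_zero]

variable {μ : Measure ℝ}

theorem support_subset_Ici_zero (h0 : ∀ᵐ m ∂μ, 0 ≤ m) : μ.support ⊆ Ici 0 :=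
  support_subset_of_isClosed isClosed_Ici h0

theorem sInf_support_nonneg (hμ : μ ≠ 0) (h0 : ∀ᵐ m ∂μ, 0 ≤ m) : 0 ≤ sInf μ.support :=
  le_csInf (nonempty_support hμ) (support_subset_Ici_zero h0)

theorem ae_sInf_support_le (h0 : ∀ᵐ m ∂μ, 0 ≤ m) : ∀ᵐ m ∂μ, sInf μ.support ≤ m :=
  mem_of_superset support_mem_ae fun _ hm ↦ csInf_le ⟨0, support_subset_Ici_zero h0⟩ hm

theorem measure_Ioo_zero_pos_of_sInf_support_lt (hμ : μ ≠ 0) (hpos : ∀ᵐ m ∂μ, 0 < m) {p : ℝ}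
    (hp : sInf μ.support < p) : 0 < μ (Ioo 0 p) := by
  have hbdd : BddBelow μ.support := ⟨0, support_subset_Ici_zero (hpos.mono fun _ hm ↦ hm.le)⟩
  have hmem : sInf μ.support ∈ μ.support := isClosed_support.csInf_mem (nonempty_support hμ) hbdd
  have hnhds : 0 < μ (Ioo (sInf μ.support - 1) p) :=
    (mem_support_iff_forall _).1 hmem _ (Ioo_mem_nhds (by linarith) hp)
  calc 0 < μ (Ioo (sInf μ.support - 1) p ∩ Ioi 0) := by
        rwa [measure_inter_conull (t := Ioi 0) hpos]
    _ ≤ μ (Ioo 0 p) := measure_mono fun m hm ↦ ⟨hm.2, hm.1.2⟩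

end MeasureTheory.Measure

noncomputable def momentSeries (μ : Measure ℝ) (k : ℕ) (x : ℝ) : ℝ :=
  ∫ m, m ^ k * x ^ m ∂μ

section MomentSeries

open Measure

variable {μ : Measure ℝ} {k : ℕ}

theorem integrable_pow_mul_rpow (h0 : ∀ᵐ m ∂μ, 0 ≤ m) (hk : Integrable (fun m ↦ m ^ k) μ)
    {x : ℝ} (hx : x ∈ Icc 0 1) : Integrable (fun m ↦ m ^ k * x ^ m) μ := by
  refine hk.mono (by fun_prop) (h0.mono fun m hm ↦ ?_)
  rw [norm_mul]
  refine mul_le_of_le_one_right (norm_nonneg _) ?_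
  rw [Real.norm_of_nonneg (Real.rpow_nonneg hx.1 m)]
  exact Real.rpow_le_one hx.1 hx.2 hm

theorem integrable_pow_of_integrable_pow_mul_rpow (h0 : ∀ᵐ m ∂μ, 0 ≤ m)
    (hk1 : Integrable (fun m ↦ m ^ (k + 1)) μ) {x : ℝ} (hx : x ∈ Ioo 0 1)
    (hkx : Integrable (fun m ↦ m ^ k * x ^ m) μ) : Integrable (fun m ↦ m ^ k) μ := by
  refine (hk1.add (hkx.div_const x)).mono' (by fun_prop) (h0.mono fun m hm ↦ ?_)
  have hmk : 0 ≤ m ^ k := pow_nonneg hm k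
  have hxm : 0 ≤ m ^ k * x ^ m / x :=
    div_nonneg (mul_nonneg hmk (Real.rpow_nonneg hx.1.le m)) hx.1.le
  rw [Real.norm_of_nonneg hmk, Pi.add_apply]
  rcases le_or_gt 1 m with h1 | h1
  · have : m ^ k ≤ m ^ (k + 1) := pow_le_pow_right₀ h1 k.le_succ
    linarith
  · have hx_le : x ≤ x ^ m := by
      simpa using Real.rpow_le_rpow_of_exponent_ge hx.1 hx.2.le h1.le
    have : m ^ k ≤ m ^ k * x ^ m / x := by
      rw [le_div_iff₀ hx.1]
      exact mul_le_mul_of_nonneg_left hx_le hmk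
    linarith [pow_nonneg hm (k + 1)]

theorem deriv_eq_zero_of_eventuallyEq_nhdsGE {f : ℝ → ℝ} {x c : ℝ}
    (h : f =ᶠ[𝓝[≥] x] fun _ ↦ c) : deriv f x = 0 := by
  by_cases hf : DifferentiableAt ℝ f x
  · rw [← hf.derivWithin (uniqueDiffWithinAt_Ici x),
      h.derivWithin_eq (h.eq_of_nhdsWithin self_mem_Ici)]
    simp
  · exact deriv_zero_of_not_differentiableAt hf

/-- The Bochner integral of a non-integrable function is `0`, and non-integrability at `x₀`
propagates to all of `[x₀, 1)`; so otherwise `g` would vanish to the right of `x₀`. -/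
theorem integrable_pow_mul_rpow_of_deriv_ne_zero (h0 : ∀ᵐ m ∂μ, 0 ≤ m) {g : ℝ → ℝ} {x₀ : ℝ}
    (hx₀ : x₀ ∈ Ioo 0 1) (hg : ∀ x ∈ Ico x₀ 1, g x = momentSeries μ k x)
    (hd : deriv g x₀ ≠ 0) : Integrable (fun m ↦ m ^ k * x₀ ^ m) μ := by
  by_contra hni
  have hzero : ∀ x ∈ Ico x₀ 1, g x = 0 := by
    intro x hx
    rw [hg x hx, momentSeries, integral_undef]
    refine fun hint ↦ hni (hint.mono (by fun_prop) (h0.mono fun m hm ↦ ?_))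
    have hx₀m := Real.rpow_nonneg hx₀.1.le m
    have hxm := Real.rpow_nonneg (hx₀.1.le.trans hx.1) m
    rw [norm_mul, norm_mul, Real.norm_of_nonneg hx₀m, Real.norm_of_nonneg hxm]
    exact mul_le_mul_of_nonneg_left (Real.rpow_le_rpow hx₀.1.le hx.1 hm) (norm_nonneg _)
  exact hd (deriv_eq_zero_of_eventuallyEq_nhdsGE
    (eventually_of_mem (Ico_mem_nhdsGE hx₀.2) hzero))

theorem hasDerivAt_momentSeries (h0 : ∀ᵐ m ∂μ, 0 ≤ m) (hk : Integrable (fun m ↦ m ^ k) μ)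
    (hk1 : Integrable (fun m ↦ m ^ (k + 1)) μ) {x : ℝ} (hx : x ∈ Ioo 0 1) :
    HasDerivAt (momentSeries μ k) (momentSeries μ (k + 1) x / x) x := by
  have hderiv := hasDerivAt_integral_of_dominated_loc_of_deriv_le (μ := μ)
    (F := fun y m ↦ m ^ k * y ^ m) (F' := fun y m ↦ m ^ k * (m * y ^ (m - 1)))
    (bound := fun m ↦ m ^ (k + 1) / (x / 2)) (Ioo_mem_nhds (half_lt_self hx.1) hx.2)
    (Eventually.of_forall fun _ ↦ by fun_prop) (integrable_pow_mul_rpow h0 hk ⟨hx.1.le, hx.2.le⟩)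
    (by fun_prop)
    (h0.mono fun m hm y hy ↦ ?bound) (hk1.div_const _)
    (h0.mono fun m hm y hy ↦ ((Real.hasDerivAt_rpow_const
      (Or.inl ((half_pos hx.1).trans hy.1).ne')).const_mul _))
  case bound =>
    have hy0 : 0 < y := (half_pos hx.1).trans hy.1
    have hym : y ^ m ≤ 1 := Real.rpow_le_one hy0.le hy.2.le hm
    calc ‖m ^ k * (m * y ^ (m - 1))‖ = m ^ (k + 1) * y ^ m / y := by
          rw [Real.rpow_sub_one hy0.ne', Real.norm_of_nonneg (by positivity)]
          ring
      _ ≤ m ^ (k + 1) * 1 / (x / 2) := by gcongr; exacts [half_pos hx.1, hy.1.le]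
      _ = m ^ (k + 1) / (x / 2) := by rw [mul_one]
  have hF' : (fun m ↦ m ^ k * (m * x ^ (m - 1))) = fun m ↦ m ^ (k + 1) * x ^ m / x := by
    funext m
    rw [Real.rpow_sub_one hx.1.ne']
    ring
  rw [hF', integral_div] at hderiv
  exact hderiv.2



theorem exists_pos_mul_rpow_le_momentSeries (hμ : μ ≠ 0) (hpos : ∀ᵐ m ∂μ, 0 < m)
    (hk : Integrable (fun m ↦ m ^ k) μ) {p : ℝ} (hp : sInf μ.support < p) :
    ∃ c > 0, ∀ x ∈ Ioc 0 1, c * x ^ p ≤ momentSeries μ k x := by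
  refine ⟨∫ m in Ioo 0 p, m ^ k ∂μ, ?_, fun x hx ↦ ?_⟩
  · rw [gt_iff_lt, setIntegral_pos_iff_support_of_nonneg_ae
      ((ae_restrict_mem measurableSet_Ioo).mono fun m hm ↦ pow_nonneg hm.1.le k) hk.integrableOn,
      inter_eq_self_of_subset_right fun m hm ↦ Function.mem_support.2 (pow_ne_zero k hm.1.ne')]
    exact measure_Ioo_zero_pos_of_sInf_support_lt hμ hpos hp
  have hint := integrable_pow_mul_rpow (hpos.mono fun _ hm ↦ hm.le) hk (Ioc_subset_Icc_self hx)
  calc (∫ m in Ioo 0 p, m ^ k ∂μ) * x ^ p = ∫ m in Ioo 0 p, m ^ k * x ^ p ∂μ :=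
        (integral_mul_const _ _).symm
    _ ≤ ∫ m in Ioo 0 p, m ^ k * x ^ m ∂μ :=
        setIntegral_mono_on (hk.mul_const _).integrableOn hint.integrableOn measurableSet_Ioo
          fun m hm ↦ mul_le_mul_of_nonneg_left
            (Real.rpow_le_rpow_of_exponent_ge hx.1 hx.2 hm.2.le) (pow_nonneg hm.1.le k)
    _ ≤ momentSeries μ k x :=
        setIntegral_le_integral hint
          (hpos.mono fun m hm ↦ mul_nonneg (pow_nonneg hm.le k) (Real.rpow_nonneg hx.1.le m))

theorem sInf_support_mul_momentSeries_le (h0 : ∀ᵐ m ∂μ, 0 ≤ m)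
    (hk : Integrable (fun m ↦ m ^ k) μ) (hk1 : Integrable (fun m ↦ m ^ (k + 1)) μ) {x : ℝ}
    (hx : x ∈ Icc 0 1) : sInf μ.support * momentSeries μ k x ≤ momentSeries μ (k + 1) x := by
  rw [momentSeries, ← integral_const_mul]
  refine integral_mono_ae ((integrable_pow_mul_rpow h0 hk hx).const_mul _)
    (integrable_pow_mul_rpow h0 hk1 hx) ?_
  filter_upwards [h0, ae_sInf_support_le h0] with m hm hm₀
  calc sInf μ.support * (m ^ k * x ^ m) ≤ m * (m ^ k * x ^ m) := by
        gcongr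
        exact mul_nonneg (pow_nonneg hm k) (Real.rpow_nonneg hx.1 m)
    _ = m ^ (k + 1) * x ^ m := by ring

theorem momentSeries_succ_le (h0 : ∀ᵐ m ∂μ, 0 ≤ m) (hk : Integrable (fun m ↦ m ^ k) μ)
    (hk1 : Integrable (fun m ↦ m ^ (k + 1)) μ) {q x : ℝ} (hq : 0 ≤ q) (hx : x ∈ Ioc 0 1) :
    momentSeries μ (k + 1) x ≤ q * momentSeries μ k x + (∫ m, m ^ (k + 1) ∂μ) * x ^ q := by
  have hint := integrable_pow_mul_rpow h0 hk (Ioc_subset_Icc_self hx)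
  rw [momentSeries, momentSeries, ← integral_const_mul, ← integral_mul_const,
    ← integral_add (hint.const_mul _) (hk1.mul_const _)]
  refine integral_mono_ae (integrable_pow_mul_rpow h0 hk1 (Ioc_subset_Icc_self hx))
    ((hint.const_mul _).add (hk1.mul_const _)) ?_
  filter_upwards [h0] with m hm
  have hmk := pow_nonneg hm k
  have hxm := Real.rpow_nonneg hx.1.le m
  rcases le_or_gt m q with hmq | hqm
  · have : m ^ (k + 1) * x ^ m ≤ q * (m ^ k * x ^ m) := by
      rw [pow_succ]
      nlinarith [mul_nonneg hmk hxm]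
    have : 0 ≤ m ^ (k + 1) * x ^ q := mul_nonneg (pow_nonneg hm _) (Real.rpow_nonneg hx.1.le q)
    linarith
  · have : m ^ (k + 1) * x ^ m ≤ m ^ (k + 1) * x ^ q := mul_le_mul_of_nonneg_left
      (Real.rpow_le_rpow_of_exponent_ge hx.1 hx.2 hqm.le) (pow_nonneg hm _)
    have : 0 ≤ q * (m ^ k * x ^ m) := by positivity
    linarith

theorem momentSeries_succ_div_le (h0 : ∀ᵐ m ∂μ, 0 ≤ m) (hk : Integrable (fun m ↦ m ^ k) μ)
    (hk1 : Integrable (fun m ↦ m ^ (k + 1)) μ) {q r c x : ℝ} (hq : 0 ≤ q) (hc : 0 < c)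
    (hx : x ∈ Ioc 0 1) (hlow : c * x ^ r ≤ momentSeries μ k x) :
    momentSeries μ (k + 1) x / momentSeries μ k x ≤
      q + (∫ m, m ^ (k + 1) ∂μ) / c * x ^ (q - r) := by
  set C := ∫ m, m ^ (k + 1) ∂μ
  have hC : 0 ≤ C := integral_nonneg_of_ae (h0.mono fun m hm ↦ pow_nonneg hm _)
  have hxr : 0 < x ^ r := Real.rpow_pos_of_pos hx.1 r
  have hG : 0 < momentSeries μ k x := (mul_pos hc hxr).trans_le hlow
  calc momentSeries μ (k + 1) x / momentSeries μ k x
      ≤ (q * momentSeries μ k x + C * x ^ q) / momentSeries μ k x := by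
        gcongr
        exact momentSeries_succ_le h0 hk hk1 hq hx
    _ = q + C * x ^ q / momentSeries μ k x := by
        rw [add_div, mul_div_cancel_right₀ _ hG.ne']
    _ ≤ q + C * x ^ q / (c * x ^ r) := by
        gcongr
        exact mul_nonneg hC (Real.rpow_nonneg hx.1.le q)
    _ = q + C / c * x ^ (q - r) := by
        rw [Real.rpow_sub hx.1]
        field_simp

theorem tendsto_momentSeries_succ_div (hμ : μ ≠ 0) (hpos : ∀ᵐ m ∂μ, 0 < m)
    (hk : Integrable (fun m ↦ m ^ k) μ) (hk1 : Integrable (fun m ↦ m ^ (k + 1)) μ) :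
    Tendsto (fun x ↦ momentSeries μ (k + 1) x / momentSeries μ k x) (𝓝[>] 0)
      (𝓝 (sInf μ.support)) := by
  set m₀ := sInf μ.support
  have h0 : ∀ᵐ m ∂μ, 0 ≤ m := hpos.mono fun _ hm ↦ hm.le
  have hm₀ : 0 ≤ m₀ := sInf_support_nonneg hμ h0
  have hx : ∀ᶠ x in 𝓝[>] (0 : ℝ), x ∈ Ioc 0 1 :=
    mem_of_superset (Ioo_mem_nhdsGT one_pos) Ioo_subset_Ioc_self
  rw [tendsto_order]
  refine ⟨fun a ha ↦ ?_, fun b hb ↦ ?_⟩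
  · obtain ⟨c, hc, hlow⟩ := exists_pos_mul_rpow_le_momentSeries hμ hpos hk (lt_add_one m₀)
    filter_upwards [hx] with x hx
    have hG : 0 < momentSeries μ k x :=
      (mul_pos hc (Real.rpow_pos_of_pos hx.1 _)).trans_le (hlow x hx)
    rw [lt_div_iff₀ hG]
    exact (mul_lt_mul_of_pos_right ha hG).trans_le
      (sInf_support_mul_momentSeries_le h0 hk hk1 (Ioc_subset_Icc_self hx))
  · set δ := (b - m₀) / 2
    have hδ : 0 < δ := by simp only [δ]; linarith
    obtain ⟨c, hc, hlow⟩ :=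
      exists_pos_mul_rpow_le_momentSeries hμ hpos hk (by linarith : m₀ < m₀ + δ / 2)
    set C := ∫ m, m ^ (k + 1) ∂μ
    have herr : Tendsto (fun x ↦ C / c * x ^ (δ / 2)) (𝓝[>] 0) (𝓝 0) := by
      have := ((Real.continuousAt_rpow_const 0 (δ / 2) (Or.inr (by positivity))).tendsto.const_mul
        (C / c)).mono_left (nhdsWithin_le_nhds (s := Ioi 0))
      simpa [Real.zero_rpow (half_pos hδ).ne'] using this
    filter_upwards [hx, herr.eventually (gt_mem_nhds hδ)] with x hx hsmall
    calc momentSeries μ (k + 1) x / momentSeries μ k x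
        ≤ m₀ + δ + C / c * x ^ (m₀ + δ - (m₀ + δ / 2)) :=
          momentSeries_succ_div_le h0 hk hk1 (by positivity) hc hx (hlow x hx)
      _ = m₀ + δ + C / c * x ^ (δ / 2) := by ring_nf
      _ < m₀ + δ + δ := by linarith
      _ = b := by simp only [δ]; ring

theorem tendsto_nhdsGT_zero_of_momentSeries_eq_inv (hμ : μ ≠ 0) (hpos : ∀ᵐ m ∂μ, 0 < m)
    (hk : Integrable (fun m ↦ m ^ k) μ) {ℓ : ℝ → ℝ}
    (hℓ : ∀ᶠ t in atTop, ℓ t ∈ Ioo 0 1 ∧ momentSeries μ k (ℓ t) = 1 / t) :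
    Tendsto ℓ atTop (𝓝[>] 0) := by
  set p := sInf μ.support + 1
  have hp : 0 < p := by linarith [sInf_support_nonneg hμ (hpos.mono fun _ hm ↦ hm.le)]
  obtain ⟨c, hc, hlow⟩ := exists_pos_mul_rpow_le_momentSeries hμ hpos hk (lt_add_one _)
  have hpow : Tendsto (fun t ↦ ℓ t ^ p) atTop (𝓝 0) := by
    refine squeeze_zero' (hℓ.mono fun t ht ↦ Real.rpow_nonneg ht.1.1.le p)
      (hℓ.mono fun t ht ↦ ?_) (by simpa using (tendsto_inv_atTop_zero (𝕜 := ℝ)).div_const c)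
    rw [le_div_iff₀' hc, ← one_div, ← ht.2]
    exact hlow _ (Ioo_subset_Ioc_self ht.1)
  have hroot := (Real.continuousAt_rpow_const 0 p⁻¹ (Or.inr (by positivity))).tendsto.comp hpow
  rw [Real.zero_rpow (inv_ne_zero hp.ne')] at hroot
  refine tendsto_nhdsWithin_iff.2 ⟨hroot.congr' (hℓ.mono fun t ht ↦ ?_), hℓ.mono fun t ht ↦ ht.1.1⟩
  exact Real.rpow_rpow_inv ht.1.1.le hp.ne'

end MomentSeries

theorem stmt_4_general (μ₀ : Measure ℝ) (hμ₀ : μ₀ ≠ 0)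
    (hsupp : μ₀ (Set.Iic (0:ℝ)) = 0)
    (K : ℝ)
    (hint : Integrable (fun m : ℝ => m ^ 2) μ₀)
    (g₀ : ℝ → ℝ)
    (hg₀ : ∀ x ∈ Set.Icc (0:ℝ) 1, g₀ x = ∫ m, m * x ^ m ∂μ₀)
    (ℓ : ℝ → ℝ)
    (hℓ : ∀ t > 1 / K, ℓ t ∈ Set.Ioo (0:ℝ) 1 ∧ ℓ t * deriv g₀ (ℓ t) = 1 / t)
    (m₀ : ℝ)
    (hm₀ : m₀ = sInf {x : ℝ | ∀ ε > 0, μ₀ (Set.Ioo (x - ε) (x + ε)) ≠ 0}) :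
    Tendsto (fun t => 1 / (t * g₀ (ℓ t))) atTop (𝓝 m₀) := by
  have hpos : ∀ᵐ m ∂μ₀, 0 < m := ae_iff.2 (measure_mono_null (fun _ ↦ not_lt.1) hsupp)
  have h0 : ∀ᵐ m ∂μ₀, 0 ≤ m := hpos.mono fun _ hm ↦ hm.le
  have hg : ∀ x ∈ Icc (0 : ℝ) 1, g₀ x = momentSeries μ₀ 1 x := fun x hx ↦ by
    simp only [hg₀ x hx, momentSeries, pow_one]
  obtain ⟨t₀, ht₀K, ht₀⟩ := ((eventually_gt_atTop (1 / K)).and (eventually_gt_atTop 0)).exists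
  obtain ⟨hℓt₀, hdt₀⟩ := hℓ t₀ ht₀K
  have hd : deriv g₀ (ℓ t₀) ≠ 0 := right_ne_zero_of_mul (hdt₀ ▸ one_div_ne_zero ht₀.ne')
  have hint1 : Integrable (fun m : ℝ ↦ m ^ 1) μ₀ :=
    integrable_pow_of_integrable_pow_mul_rpow h0 hint hℓt₀
      (integrable_pow_mul_rpow_of_deriv_ne_zero h0 hℓt₀
        (fun x hx ↦ hg x ⟨hℓt₀.1.le.trans hx.1, hx.2.le⟩) hd)
  have hH : ∀ t > 1 / K, ℓ t ∈ Ioo 0 1 ∧ momentSeries μ₀ 2 (ℓ t) = 1 / t := by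
    intro t ht
    obtain ⟨hℓt, hdt⟩ := hℓ t ht
    have hgt : g₀ =ᶠ[𝓝 (ℓ t)] momentSeries μ₀ 1 :=
      eventually_of_mem (Ioo_mem_nhds hℓt.1 hℓt.2) fun x hx ↦ hg x (Ioo_subset_Icc_self hx)
    rw [hgt.deriv_eq, (hasDerivAt_momentSeries h0 hint1 hint hℓt).deriv,
      mul_div_cancel₀ _ hℓt.1.ne'] at hdt
    exact ⟨hℓt, hdt⟩
  have hℓ0 := tendsto_nhdsGT_zero_of_momentSeries_eq_inv hμ₀ hpos hint
    ((eventually_gt_atTop (1 / K)).mono hH)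
  rw [hm₀, Measure.setOf_measure_Ioo_ne_zero_eq_support]
  refine ((tendsto_momentSeries_succ_div hμ₀ hpos hint1 hint).comp hℓ0).congr'
    ((eventually_gt_atTop (1 / K)).mono fun t ht ↦ ?_)
  obtain ⟨hℓt, hHt⟩ := hH t ht
  simp only [Function.comp_apply, hHt, div_div, hg _ (Ioo_subset_Icc_self hℓt)]

/-- With `ℓ_t` solving `ℓ_t g₀'(ℓ_t) = 1/t` for `t > 1/K` and
`M_t = g₀(ℓ_t)`, one has `1/(t M_t) → m₀ = inf supp μ₀` as `t → ∞`. -/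
theorem stmt_4 (μ₀ : Measure ℝ) (hμ₀ : μ₀ ≠ 0)
    (hsupp : μ₀ (Set.Iic (0:ℝ)) = 0)
    (K : ℝ) (hKpos : 0 < K)
    (hint : Integrable (fun m : ℝ => m ^ 2) μ₀)
    (hK : ∫ m, m ^ 2 ∂μ₀ = K)
    (g₀ : ℝ → ℝ)
    (hg₀ : ∀ x ∈ Set.Icc (0:ℝ) 1, g₀ x = ∫ m, m * x ^ m ∂μ₀)
    (ℓ : ℝ → ℝ)
    (hℓ : ∀ t > 1 / K, ℓ t ∈ Set.Ioo (0:ℝ) 1 ∧ ℓ t * deriv g₀ (ℓ t) = 1 / t)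
    (m₀ : ℝ) (hm₀nonneg : 0 ≤ m₀)
    (hm₀ : m₀ = sInf {x : ℝ | ∀ ε > 0, μ₀ (Set.Ioo (x - ε) (x + ε)) ≠ 0}) :
    Tendsto (fun t => 1 / (t * g₀ (ℓ t))) atTop (𝓝 m₀) :=
  stmt_4_general μ₀ hμ₀ hsupp K hint g₀ hg₀ ℓ hℓ m₀ hm₀
end

section
/- With k₀ as above, if k₀(1⁻) = A₀ < ∞ and k₀'(1⁻) = K < ∞ with K > 0, then lim_{x→1⁻} G(x) = 1 − A₀/K; if k₀(1⁻) = +∞, then lim_{x→1⁻} k₀(x)/k₀'(x) = 0 and hence lim_{x→1⁻} G(x) = 1. -/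
open Set Filter Topology

/-!
With finite limits the claim is limit arithmetic. When `k₀ → ∞`, convexity (a power series
with non-negative coefficients is a nonnegative combination of the convex functions `x ^ n`) gives,
for `y < x < 1` with `k₀ x ≥ 2 k₀ y`,
`k₀' x ≥ (k₀ x - k₀ y) / (x - y) ≥ k₀ x / (2 (1 - y))`, so `k₀ x / k₀' x ≤ 2 (1 - y)`.
-/

theorem convexOn_of_hasSum_pow {c : ℕ → ℝ} (hc : ∀ n, 0 ≤ c n) {f : ℝ → ℝ} {s : Set ℝ}
    (hs : Convex ℝ s) (hs₀ : s ⊆ Ici 0) (hf : ∀ x ∈ s, HasSum (fun n => c n * x ^ n) (f x)) :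
    ConvexOn ℝ s f := by
  refine ⟨hs, fun x hx y hy a b ha hb hab => ?_⟩
  have hterm (n : ℕ) : c n * (a • x + b • y) ^ n ≤ a * (c n * x ^ n) + b * (c n * y ^ n) := by
    have := (((convexOn_pow n).subset hs₀ hs).smul (hc n)).2 hx hy ha hb hab
    simp only [smul_eq_mul] at this ⊢
    linarith
  exact hasSum_le hterm (hf _ (hs hx hy ha hb hab))
    (((hf x hx).mul_left a).add ((hf y hy).mul_left b))

theorem ConvexOn.div_deriv_le {s : Set ℝ} {f : ℝ → ℝ} {x y b : ℝ} (hfc : ConvexOn ℝ s f)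
    (hy : y ∈ s) (hx : x ∈ s) (hyx : y < x) (hxb : x ≤ b) (hfx : 0 < f x) (hfy : 2 * f y ≤ f x)
    (hd : DifferentiableAt ℝ f x) :
    0 < f x / deriv f x ∧ f x / deriv f x ≤ 2 * (b - y) := by
  have hslope : (f x - f y) / (x - y) ≤ deriv f x := by
    simpa only [slope_def_field] using hfc.slope_le_deriv hy hx hyx hd
  have hby : 0 < b - y := by linarith
  have hlower : f x / 2 / (b - y) ≤ (f x - f y) / (x - y) :=
    div_le_div₀ (by linarith) (by linarith) (by linarith) (by linarith)
  have hderiv : 0 < deriv f x :=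
    (by positivity : 0 < f x / 2 / (b - y)).trans_le (hlower.trans hslope)
  refine ⟨div_pos hfx hderiv, ?_⟩
  rw [div_le_iff₀ hderiv]
  rw [div_div, div_le_iff₀ (by positivity)] at hlower
  nlinarith

theorem ConvexOn.tendsto_div_deriv_nhdsLT {s : Set ℝ} {f : ℝ → ℝ} {b : ℝ}
    (hs : s ∈ 𝓝[<] b) (hfc : ConvexOn ℝ s f)
    (hd : ∀ᶠ x in 𝓝[<] b, DifferentiableAt ℝ f x) (hf : Tendsto f (𝓝[<] b) atTop) :
    Tendsto (fun x => f x / deriv f x) (𝓝[<] b) (𝓝 0) := by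
  rw [Metric.tendsto_nhds]
  intro ε hε
  obtain ⟨y, hys, hyε, hyb⟩ :=
    Filter.nonempty_of_mem (inter_mem hs (Ioo_mem_nhdsLT (by linarith : b - ε / 2 < b)))
  filter_upwards [hs, hd, Ioo_mem_nhdsLT hyb, hf.eventually_gt_atTop 0,
    hf.eventually_ge_atTop (2 * f y)] with x hxs hxd hx hfx hfy
  obtain ⟨hpos, hle⟩ := hfc.div_deriv_le hys hxs hx.1 hx.2.le hfx hfy hxd
  rw [Real.dist_eq, sub_zero, abs_of_pos hpos]
  linarith

theorem stmt_11_general (c : ℕ → ℝ) (hc : ∀ a, 0 ≤ c a)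
    (k₀ : ℝ → ℝ)
    (hrep : ∀ x ∈ Set.Ico (0:ℝ) 1, HasSum (fun a : ℕ => c a * x ^ a) (k₀ x))
    (hd1 : ∀ x ∈ Set.Ioo (0:ℝ) 1, HasDerivAt k₀ (deriv k₀ x) x)
    (G : ℝ → ℝ) (hG : ∀ x, G x = x - k₀ x / deriv k₀ x) :
    (∀ A₀ K : ℝ, 0 < K →
      Tendsto k₀ (𝓝[<] (1:ℝ)) (𝓝 A₀) →
      Tendsto (deriv k₀) (𝓝[<] (1:ℝ)) (𝓝 K) →
      Tendsto G (𝓝[<] (1:ℝ)) (𝓝 (1 - A₀ / K))) ∧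
    (Tendsto k₀ (𝓝[<] (1:ℝ)) atTop →
      Tendsto (fun x => k₀ x / deriv k₀ x) (𝓝[<] (1:ℝ)) (𝓝 0) ∧
      Tendsto G (𝓝[<] (1:ℝ)) (𝓝 1)) := by
  have hG' : G = fun x => x - k₀ x / deriv k₀ x := funext hG
  have hid : Tendsto (fun x : ℝ => x) (𝓝[<] 1) (𝓝 1) :=
    tendsto_nhdsWithin_of_tendsto_nhds tendsto_id
  refine ⟨fun A₀ K hK hA hK' => hG' ▸ hid.sub (hA.div hK' hK.ne'), fun htop => ?_⟩
  have hconv : ConvexOn ℝ (Ico 0 1) k₀ :=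
    convexOn_of_hasSum_pow hc (convex_Ico 0 1) (fun _ hx => hx.1) hrep
  have hdiff : ∀ᶠ x in 𝓝[<] (1:ℝ), DifferentiableAt ℝ k₀ x := by
    filter_upwards [Ioo_mem_nhdsLT zero_lt_one] with x hx using (hd1 x hx).differentiableAt
  have hratio := hconv.tendsto_div_deriv_nhdsLT (Ico_mem_nhdsLT zero_lt_one) hdiff htop
  exact ⟨hratio, hG' ▸ by simpa using hid.sub hratio⟩

/-- With `G(x) = x - k₀(x)/k₀'(x)`: if `k₀(1⁻) = A₀ < ∞` and
`k₀'(1⁻) = K ∈ (0,∞)`, then `G(x) → 1 - A₀/K` as `x → 1⁻`; if `k₀(1⁻) = +∞`,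
then `k₀(x)/k₀'(x) → 0` and `G(x) → 1` as `x → 1⁻`. -/
theorem stmt_11 (c : ℕ → ℝ) (hc : ∀ a, 0 ≤ c a)
    (k₀ : ℝ → ℝ)
    (hrep : ∀ x ∈ Set.Ico (0:ℝ) 1, HasSum (fun a : ℕ => c a * x ^ a) (k₀ x))
    (hpos : ∀ x ∈ Set.Ioo (0:ℝ) 1, 0 < k₀ x)
    (hd1 : ∀ x ∈ Set.Ioo (0:ℝ) 1, HasDerivAt k₀ (deriv k₀ x) x)
    (hd1pos : ∀ x ∈ Set.Ioo (0:ℝ) 1, 0 < deriv k₀ x)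
    (G : ℝ → ℝ) (hG : ∀ x, G x = x - k₀ x / deriv k₀ x) :
    (∀ A₀ K : ℝ, 0 < K →
      Tendsto k₀ (𝓝[<] (1:ℝ)) (𝓝 A₀) →
      Tendsto (deriv k₀) (𝓝[<] (1:ℝ)) (𝓝 K) →
      Tendsto G (𝓝[<] (1:ℝ)) (𝓝 (1 - A₀ / K))) ∧
    (Tendsto k₀ (𝓝[<] (1:ℝ)) atTop →
      Tendsto (fun x => k₀ x / deriv k₀ x) (𝓝[<] (1:ℝ)) (𝓝 0) ∧
      Tendsto G (𝓝[<] (1:ℝ)) (𝓝 1)) :=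
  stmt_11_general c hc k₀ hrep hd1 G hG
end

section
/- Let ν be a finite measure on ℕ with ν(0) > 0 and generating function k(x) = Σ_{a≥0} ν(a) x^a, and let p_ν ∈ (0,1] be the smallest root of k(x) = x (assumed to exist, e.g. when k(1) ≤ 1 or by convexity when k(1)=1). Let c ∈ (0,1] satisfy c k'(c) = k(c) with k'(c) = k(c)/c. If k'(1) > 1 = k(1) (supercritical case with k(1)=1), then p_ν < c, i.e. the smallest fixed point of k is strictly below the tangency point c. -/
open Set Filter Topology

/-!
Let `k` be convex on `[0, 1]` with `k 1 = 1 < k' 1`, and let `c` be a tangency point: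
`c k'(c) = k(c)`. If `c ≤ k c`, the tangent at `c` has slope `k' c = k c / c ≥ 1` and lies on or
above the diagonal to the right of `c`, so by convexity `k x ≥ x` on `[c, 1]`; this contradicts
`k x < x` just left of `1`, forced by `k' 1 > 1`. Hence `k c < c`, and since `k 0 = ν 0 > 0` the
intermediate value theorem yields a fixed point of `k` in `(0, c)`, which bounds `p` from below.
-/

lemma convexOn_of_hasSum_nonneg_mul_pow {ν : ℕ → ℝ} (hν : ∀ a, 0 ≤ ν a) {s : Set ℝ}
    (hs : Convex ℝ s) (hs0 : s ⊆ Ici 0) {k : ℝ → ℝ}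
    (hk : ∀ x ∈ s, HasSum (fun a : ℕ => ν a * x ^ a) (k x)) : ConvexOn ℝ s k := by
  refine ⟨hs, fun x hx y hy a b ha hb hab => ?_⟩
  have hle : ∀ i : ℕ, ν i * (a • x + b • y) ^ i ≤ a * (ν i * x ^ i) + b * (ν i * y ^ i) := by
    intro i
    have hpow := (convexOn_pow i).2 (hs0 hx) (hs0 hy) ha hb hab
    simp only [smul_eq_mul] at hpow ⊢
    nlinarith [mul_le_mul_of_nonneg_left hpow (hν i)]
  simpa only [smul_eq_mul] using hasSum_le hle (hk _ (hs hx hy ha hb hab))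
    (((hk x hx).mul_left a).add ((hk y hy).mul_left b))

lemma exists_mem_Ioo_lt_self_of_one_lt_derivWithin {f : ℝ → ℝ} {f' a b : ℝ} (hab : a < b)
    (hf : HasDerivWithinAt f f' (Ioo a b) b) (hfb : f b = b) (hf' : 1 < f') :
    ∃ x ∈ Ioo a b, f x < x := by
  rw [hasDerivWithinAt_iff_tendsto_slope, sdiff_singleton_eq_self fun h => h.2.false] at hf
  have : (𝓝[Ioo a b] b).NeBot := right_nhdsWithin_Ioo_neBot hab
  obtain ⟨x, hslope, hx⟩ :=
    ((hf.eventually (eventually_gt_nhds hf')).and eventually_mem_nhdsWithin).exists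
  refine ⟨x, hx, ?_⟩
  rw [slope_def_field, hfb, one_lt_div_of_neg (by linarith [hx.2])] at hslope
  linarith

lemma exists_mem_Ioo_apply_eq_self {f : ℝ → ℝ} {a b : ℝ} (hab : a ≤ b)
    (hf : ContinuousOn f (Icc a b)) (ha : a < f a) (hb : f b < b) :
    ∃ x ∈ Ioo a b, f x = x := by
  obtain ⟨x, hx, hfx⟩ := intermediate_value_Ioo' hab (hf.sub continuousOn_id)
    (show (0 : ℝ) ∈ Ioo (f b - b) (f a - a) from ⟨by linarith, by linarith⟩)
  exact ⟨x, hx, sub_eq_zero.mp hfx⟩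

lemma ConvexOn.apply_lt_self_of_mul_deriv_eq {k k' : ℝ → ℝ} (hconv : ConvexOn ℝ (Icc 0 1) k)
    (hk' : ∀ x ∈ Icc (0 : ℝ) 1, HasDerivWithinAt k (k' x) (Icc 0 1) x)
    (hk1 : k 1 = 1) (hsup : 1 < k' 1) {c : ℝ} (hc : c ∈ Ioc 0 1) (hctan : c * k' c = k c) :
    k c < c := by
  by_contra! hck
  obtain rfl | hc1 := hc.2.eq_or_lt
  · linarith [one_mul (k' 1)]
  have hc_mem : c ∈ Icc (0 : ℝ) 1 := ⟨hc.1.le, hc.2⟩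
  obtain ⟨x, hx, hkx⟩ := exists_mem_Ioo_lt_self_of_one_lt_derivWithin hc1
    ((hk' 1 ⟨zero_le_one, le_rfl⟩).mono fun y hy => ⟨(hc.1.trans hy.1).le, hy.2.le⟩) hk1 hsup
  have hk'c : 1 ≤ k' c := le_of_mul_le_mul_left (by linarith) hc.1
  have htangent : k' c ≤ slope k c x :=
    hconv.le_slope_of_hasDerivWithinAt hc_mem ⟨(hc.1.trans hx.1).le, hx.2.le⟩ hx.1 (hk' c hc_mem)
  rw [slope_def_field, le_div_iff₀ (sub_pos.mpr hx.1)] at htangent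
  nlinarith [hx.1]

theorem stmt_13_general (ν : ℕ → ℝ) (hν : ∀ a, 0 ≤ ν a) (hν0 : 0 < ν 0)
    (hs : HasSum ν 1)
    (k k' : ℝ → ℝ)
    (hk : ∀ x ∈ Set.Icc (0:ℝ) 1, HasSum (fun a : ℕ => ν a * x ^ a) (k x))
    (hk' : ∀ x ∈ Set.Icc (0:ℝ) 1, HasDerivWithinAt k (k' x) (Set.Icc (0:ℝ) 1) x)
    (hsup : 1 < k' 1)
    (p : ℝ)
    (hpmin : ∀ x ∈ Set.Icc (0:ℝ) 1, k x = x → p ≤ x)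
    (c : ℝ) (hc : c ∈ Set.Ioc (0:ℝ) 1) (hctan : c * k' c = k c) :
    p < c := by
  have hconv := convexOn_of_hasSum_nonneg_mul_pow hν (convex_Icc 0 1) (fun x hx => hx.1) hk
  have hk1 : k 1 = 1 := (hk 1 ⟨zero_le_one, le_rfl⟩).unique (by simpa using hs)
  have hk0 : k 0 = ν 0 := by
    refine (hk 0 ⟨le_rfl, zero_le_one⟩).unique ?_
    simpa using hasSum_single (f := fun a : ℕ => ν a * 0 ^ a) 0 fun a ha => by simp [ha]
  have hkc := hconv.apply_lt_self_of_mul_deriv_eq hk' hk1 hsup hc hctan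
  have hcont : ContinuousOn k (Icc 0 c) := fun x hx =>
    ((hk' x ⟨hx.1, hx.2.trans hc.2⟩).continuousWithinAt).mono (Icc_subset_Icc le_rfl hc.2)
  obtain ⟨x, hx, hkx⟩ := exists_mem_Ioo_apply_eq_self hc.1.le hcont (by linarith) hkc
  exact (hpmin x ⟨hx.1.le, hx.2.le.trans hc.2⟩ hkx).trans_lt hx.2

/-- For a probability measure `ν` on ℕ with `ν(0) > 0`, some
`ν(a) > 0` with `a ≥ 2`, generating function `k` with `k(1) = 1` and
`k'(1) > 1`, the smallest root `p` of `k(x) = x` in `[0,1]` is strictly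
smaller than the tangency point `c` solving `c k'(c) = k(c)`. -/
theorem stmt_13 (ν : ℕ → ℝ) (hν : ∀ a, 0 ≤ ν a) (hν0 : 0 < ν 0)
    (hν2 : ∃ a ≥ 2, 0 < ν a) (hs : HasSum ν 1)
    (k k' : ℝ → ℝ)
    (hk : ∀ x ∈ Set.Icc (0:ℝ) 1, HasSum (fun a : ℕ => ν a * x ^ a) (k x))
    (hk' : ∀ x ∈ Set.Icc (0:ℝ) 1, HasDerivWithinAt k (k' x) (Set.Icc (0:ℝ) 1) x)
    (hsup : 1 < k' 1)
    (p : ℝ) (hp : p ∈ Set.Icc (0:ℝ) 1) (hproot : k p = p)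
    (hpmin : ∀ x ∈ Set.Icc (0:ℝ) 1, k x = x → p ≤ x)
    (c : ℝ) (hc : c ∈ Set.Ioc (0:ℝ) 1) (hctan : c * k' c = k c) :
    p < c :=
  stmt_13_general ν hν hν0 hs k k' hk hk' hsup p hpmin c hc hctan
end
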